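/- For all α ∈ F_3, β ∈ F and γ ∈ F∖{0}, one has 9·#{d ∈ D_{α,β} : Tr(γ·d) ≠ 0} = 2q + 2·w(α,β) − w(α, β+γ) − w(α, β−γ). -/

import Mathlib

open scoped Classical

noncomputable section

def zeta3 : ℂ := Complex.exp (2 * Real.pi * Complex.I / 3)

def chi (F : Type*) [Field F] [Fintype F] [Algebra (ZMod 3) F] (c : F) : ℂ :=
  zeta3 ^ (Algebra.trace (ZMod 3) F c).val

def Ssum (F : Type*) [Field F] [Fintype F] [Algebra (ZMod 3) F] (N : ℕ) (a b : F) : ℂ :=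
  ∑ x : Fˣ, chi F (a * (x : F) ^ ((Fintype.card F - 1) / N) + b * (x : F))

def wab (F : Type*) [Field F] [Fintype F] [Algebra (ZMod 3) F] (N : ℕ) (α : ZMod 3) (β : F) : ℂ :=
  zeta3 ^ (-α).val * Ssum F N 1 β + zeta3 ^ α.val * Ssum F N 2 (2 * β)

def Dset (F : Type*) [Field F] [Fintype F] [Algebra (ZMod 3) F] (N : ℕ) (α : ZMod 3) (β : F) : Set F :=
  {x | x ≠ 0 ∧ Algebra.trace (ZMod 3) F (x ^ ((Fintype.card F - 1) / N) + β * x) = α}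

def wtd (F : Type*) [Field F] [Fintype F] [Algebra (ZMod 3) F] (N : ℕ) (α : ZMod 3) (β γ : F) : ℕ :=
  Set.ncard {d ∈ Dset F N α β | Algebra.trace (ZMod 3) F (γ * d) ≠ 0}

def codeMap (F : Type*) [Field F] [Fintype F] [Algebra (ZMod 3) F] (N : ℕ) (α : ZMod 3) (β : F) :
    F → (↥(Dset F N α β) → ZMod 3) :=
  fun x d => Algebra.trace (ZMod 3) F ((d : F) * x)

def sqrtq (F : Type*) [Fintype F] : ℝ := Real.sqrt (Fintype.card F)

def Ind {F : Type*} [Monoid F] (g x : F) : ℕ := sInf {k : ℕ | x = g ^ k}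

def jmod {F : Type*} [Monoid F] (N : ℕ) (g x : F) : ℕ := ((-(Ind g x : ℤ)) % (N : ℤ)).toNat

def J1p1 (ℓ m j : ℕ) : Prop := 1 ≤ j ∧ j ≤ (ℓ - 1) * ℓ ^ (m - 1) ∧ ¬ ℓ ^ (m - 1) ∣ j
def J1p2 (ℓ m j : ℕ) : Prop := 1 ≤ j ∧ j ≤ (ℓ - 1) * ℓ ^ (m - 1) ∧ ℓ ^ (m - 1) ∣ j ∧ ¬ 2 ∣ j
def J1p3 (ℓ m j : ℕ) : Prop := 1 ≤ j ∧ j ≤ (ℓ - 1) * ℓ ^ (m - 1) ∧ 2 * ℓ ^ (m - 1) ∣ j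
def J2mem (ℓ m j : ℕ) : Prop := (ℓ - 1) * ℓ ^ (m - 1) < j ∧ j ≤ ℓ ^ m
def J3p1 (ℓ m j : ℕ) : Prop := (ℓ ^ m < j ∧ j ≤ 2 * ℓ ^ m - ℓ ^ (m - 1)) ∧ ¬ ℓ ^ (m - 1) ∣ j
def J3p2 (ℓ m j : ℕ) : Prop := ∃ k, 1 ≤ k ∧ k ≤ ℓ - 1 ∧ k % 2 = 0 ∧ j = ℓ ^ m + k * ℓ ^ (m - 1)
def J3p3 (ℓ m j : ℕ) : Prop := ∃ k, 1 ≤ k ∧ k ≤ ℓ - 1 ∧ k % 2 = 1 ∧ j = ℓ ^ m + k * ℓ ^ (m - 1)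
def J4mem (ℓ m j : ℕ) : Prop := 2 * ℓ ^ m - ℓ ^ (m - 1) < j ∧ j ≤ 2 * ℓ ^ m - 1
def Jp (ℓ m j : ℕ) : Prop := j = 0 ∨ J1p1 ℓ m j ∨ J2mem ℓ m j ∨ J3p1 ℓ m j ∨ J4mem ℓ m j
def Jpp (ℓ m j : ℕ) : Prop := J1p1 ℓ m j ∨ (J2mem ℓ m j ∧ j ≠ ℓ ^ m) ∨ J3p1 ℓ m j ∨ J4mem ℓ m j

/-!
Orthogonality of the additive characters of `𝔽₃` gives, for `t b ∈ 𝔽₃`,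
`9·[t = 0 ∧ b ≠ 0] = 3·∑ᵤ ζ^{ut} − ∑ᵤ ∑ᵥ ζ^{ut+vb}`. Taking `t = Tr(x^s + βx) − α`,
`b = Tr(γx)` and summing over `x ∈ F^*` expresses `9·wt(γ)` through the sums `S(u, uβ + vγ)`.
For `u = 0` these are `q − 1` or `−1` by orthogonality on `F`; for `u = 1, 2` they regroup,
using `3 = 0` in `F`, into `w(α, β)` and `w(α, β ± γ)`.
-/

open Finset

namespace AddChar

variable {R : Type*} [CommRing R] [Fintype R] {ψ : AddChar R ℂ}

lemma card_sq_mul_indicator_eq (hψ : ψ.IsPrimitive) (t b : R) :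
    (Fintype.card R : ℂ) ^ 2 * (if t = 0 ∧ b ≠ 0 then 1 else 0) =
      Fintype.card R * ∑ u, ψ (u * t) - ∑ u, ∑ v, ψ (u * t + v * b) := by
  have hsum (s : R) := sum_mulShift s hψ
  simp_rw [map_add_eq_mul, ← mul_sum, ← sum_mul, hsum]
  by_cases ht : t = 0 <;> by_cases hb : b = 0 <;> simp [ht, hb]
  ring

end AddChar

lemma Fintype.sum_units_eq_sum_sub {G₀ M : Type*} [GroupWithZero G₀] [Fintype G₀]
    [DecidableEq G₀] [AddCommGroup M] (f : G₀ → M) : ∑ x : G₀ˣ, f x = ∑ x, f x - f 0 := by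
  rw [eq_sub_iff_add_eq, ← add_sum_erase _ f (mem_univ 0), add_comm,
    ← filter_ne' univ 0, sum_subtype _ (p := (· ≠ 0)) (by simp) f]
  congr 1
  exact Fintype.sum_equiv unitsEquivNeZero _ _ fun _ => rfl

lemma zeta3_pow_val (t : ZMod 3) : zeta3 ^ t.val = ZMod.stdAddChar t := by
  rw [ZMod.stdAddChar_apply, ZMod.toCircle_apply, zeta3, ← Complex.exp_nat_mul]
  congr 1
  push_cast
  ring

section TraceChar

variable (p : ℕ) [Fact p.Prime] (F : Type*) [Field F] [Algebra (ZMod p) F]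

def traceChar : AddChar F ℂ :=
  ZMod.stdAddChar.compAddMonoidHom (Algebra.trace (ZMod p) F).toAddMonoidHom

lemma traceChar_apply (c : F) : traceChar p F c = ZMod.stdAddChar (Algebra.trace (ZMod p) F c) :=
  rfl

lemma isPrimitive_traceChar [Fintype F] : (traceChar p F).IsPrimitive := by
  refine AddChar.IsPrimitive.of_ne_one (AddChar.ne_one_iff.mpr ?_)
  obtain ⟨a, ha⟩ := Algebra.trace_surjective (ZMod p) F 1
  refine ⟨a, fun h => one_ne_zero (ZMod.injective_stdAddChar (N := p) ?_)⟩
  rwa [AddChar.map_zero_eq_one, ← ha]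

lemma sum_units_traceChar_mul [Fintype F] {c : F} (hc : c ≠ 0) :
    ∑ x : Fˣ, traceChar p F (c * x) = -1 := by
  rw [Fintype.sum_units_eq_sum_sub (fun x => traceChar p F (c * x))]
  simp_rw [mul_comm c]
  rw [AddChar.sum_mulShift c (isPrimitive_traceChar p F)]
  simp [hc]

end TraceChar

lemma three_eq_zero (F : Type*) [Field F] [Algebra (ZMod 3) F] : (3 : F) = 0 := by
  rw [← map_ofNat (algebraMap (ZMod 3) F) 3, show (OfNat.ofNat 3 : ZMod 3) = 0 by decide, map_zero]

lemma ZMod.sum_univ_three {M : Type*} [AddCommMonoid M] (f : ZMod 3 → M) :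
    ∑ u, f u = f 0 + f 1 + f 2 :=
  Fin.sum_univ_three f

section CharThree

variable (F : Type*) [Field F] [Fintype F] [Algebra (ZMod 3) F]

local notation "ψ" => (ZMod.stdAddChar : AddChar (ZMod 3) ℂ)
local notation "Tr" => Algebra.trace (ZMod 3) F

lemma chi_eq_traceChar (c : F) : chi F c = traceChar 3 F c := by
  rw [chi, zeta3_pow_val, traceChar_apply]

lemma Ssum_zero_zero (N : ℕ) : Ssum F N 0 0 = Fintype.card F - 1 := by
  simp [Ssum, chi, Fintype.card_units, Nat.cast_sub Fintype.card_pos]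

lemma Ssum_zero_left (N : ℕ) {b : F} (hb : b ≠ 0) : Ssum F N 0 b = -1 := by
  simpa [Ssum, chi_eq_traceChar] using sum_units_traceChar_mul 3 F hb

lemma sum_units_stdAddChar_trace (N : ℕ) (u v α : ZMod 3) (β γ : F) :
    ∑ x : Fˣ, ψ (u * (Tr ((x : F) ^ ((Fintype.card F - 1) / N) + β * x) - α) + v * Tr (γ * x)) =
      ψ (-(u * α)) * Ssum F N (algebraMap (ZMod 3) F u)
        (algebraMap (ZMod 3) F u * β + algebraMap (ZMod 3) F v * γ) := by
  rw [Ssum, mul_sum]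
  refine sum_congr rfl fun x _ => ?_
  have hsplit : algebraMap (ZMod 3) F u * (x : F) ^ ((Fintype.card F - 1) / N) +
      (algebraMap (ZMod 3) F u * β + algebraMap (ZMod 3) F v * γ) * x =
      u • ((x : F) ^ ((Fintype.card F - 1) / N) + β * x) + v • (γ * x) := by
    simp only [Algebra.smul_def]
    ring
  rw [chi_eq_traceChar, traceChar_apply, ← AddChar.map_add_eq_mul, hsplit]
  congr 1
  simp only [map_add, map_smul, smul_eq_mul]
  ring

lemma wtd_eq_sum_units (N : ℕ) (α : ZMod 3) (β γ : F) :
    (wtd F N α β γ : ℂ) = ∑ x : Fˣ,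
      if Tr ((x : F) ^ ((Fintype.card F - 1) / N) + β * x) - α = 0 ∧ Tr (γ * x) ≠ 0
      then 1 else 0 := by
  rw [Fintype.sum_units_eq_sum_sub (fun y : F =>
    if Tr (y ^ ((Fintype.card F - 1) / N) + β * y) - α = 0 ∧ Tr (γ * y) ≠ 0 then (1 : ℂ) else 0)]
  simp only [mul_zero, map_zero, ne_eq, not_true_eq_false, and_false, if_false, sub_zero]
  rw [sum_boole, wtd, ← Set.ncard_coe_finset]
  congr 2
  ext y
  simp only [Dset, coe_filter, mem_univ, true_and, Set.mem_ofPred_eq, sub_eq_zero]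
  exact ⟨fun ⟨⟨_, hT⟩, hγ⟩ => ⟨hT, hγ⟩,
    fun ⟨hT, hγ⟩ => ⟨⟨fun hy => hγ (by rw [hy, mul_zero, map_zero]), hT⟩, hγ⟩⟩

lemma nine_mul_wtd_eq_sum (N : ℕ) (α : ZMod 3) (β γ : F) :
    (9 : ℂ) * wtd F N α β γ =
      3 * ∑ u : ZMod 3, ψ (-(u * α)) *
          Ssum F N (algebraMap (ZMod 3) F u) (algebraMap (ZMod 3) F u * β) -
        ∑ u : ZMod 3, ∑ v : ZMod 3, ψ (-(u * α)) * Ssum F N (algebraMap (ZMod 3) F u)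
          (algebraMap (ZMod 3) F u * β + algebraMap (ZMod 3) F v * γ) := by
  have hind (t b : ZMod 3) : (9 : ℂ) * (if t = 0 ∧ b ≠ 0 then 1 else 0) =
      3 * ∑ u, ψ (u * t) - ∑ u, ∑ v, ψ (u * t + v * b) := by
    simpa [ZMod.card, show (3 : ℂ) ^ 2 = 9 by norm_num] using
      AddChar.card_sq_mul_indicator_eq (ZMod.isPrimitive_stdAddChar 3) t b
  have hconst (u : ZMod 3) : ∑ x : Fˣ,
      ψ (u * (Tr ((x : F) ^ ((Fintype.card F - 1) / N) + β * x) - α)) =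
      ψ (-(u * α)) * Ssum F N (algebraMap (ZMod 3) F u) (algebraMap (ZMod 3) F u * β) := by
    simpa using sum_units_stdAddChar_trace F N u 0 α β γ
  rw [wtd_eq_sum_units, mul_sum]
  simp_rw [hind]
  rw [sum_sub_distrib, ← mul_sum, sum_comm]
  simp_rw [hconst]
  congr 1
  rw [sum_comm]
  refine sum_congr rfl fun u _ => ?_
  rw [sum_comm]
  exact sum_congr rfl fun v _ => sum_units_stdAddChar_trace F N u v α β γ

end CharThree

theorem statement_11_general (ℓ m : ℕ)
    (F : Type*) [Field F] [Fintype F] [Algebra (ZMod 3) F] :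
    ∀ (α : ZMod 3) (β γ : F), γ ≠ 0 →
      (9 : ℂ) * (wtd F (2 * ℓ ^ m) α β γ : ℂ) =
        2 * (Fintype.card F : ℂ) + 2 * wab F (2 * ℓ ^ m) α β -
          wab F (2 * ℓ ^ m) α (β + γ) - wab F (2 * ℓ ^ m) α (β - γ) := by
  intro α β γ hγ
  have h3 := three_eq_zero F
  have h2γ : (2 : F) * γ ≠ 0 :=
    mul_ne_zero (fun h => one_ne_zero (by linear_combination h3 - h : (1 : F) = 0)) hγ
  have hα : -(2 * α) = α := by
    have h3' : (3 : ZMod 3) = 0 := rfl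
    linear_combination (-α) * h3'
  have hβ₁ : β + 2 * γ = β - γ := by linear_combination γ * h3
  have hβ₂ : 2 * β + γ = 2 * (β - γ) := by linear_combination γ * h3
  rw [nine_mul_wtd_eq_sum]
  simp only [ZMod.sum_univ_three, wab, zeta3_pow_val, map_zero, map_one, map_ofNat, zero_mul,
    one_mul, add_zero, zero_add, neg_zero, AddChar.map_zero_eq_one, Ssum_zero_zero,
    Ssum_zero_left F _ hγ, Ssum_zero_left F _ h2γ, hα, hβ₁, hβ₂, ← mul_add]
  ring

/-- `9·#{d ∈ D_{α,β} : Tr(γd) ≠ 0} = 2q + 2w(α,β) − w(α,β+γ) − w(α,β−γ)`. -/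
theorem statement_11 (ℓ m : ℕ) (hℓ : ℓ.Prime) (hℓ3 : 3 < ℓ) (hm : 0 < m)
    (hprim : orderOf ((3 : ZMod (2 * ℓ ^ m))) = (2 * ℓ ^ m).totient)
    (F : Type*) [Field F] [Fintype F] [Algebra (ZMod 3) F]
    (hq : Fintype.card F = 3 ^ (2 * ℓ ^ m).totient) :
    ∀ (α : ZMod 3) (β γ : F), γ ≠ 0 →
      (9 : ℂ) * (wtd F (2 * ℓ ^ m) α β γ : ℂ) =
        2 * (Fintype.card F : ℂ) + 2 * wab F (2 * ℓ ^ m) α β -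
          wab F (2 * ℓ ^ m) α (β + γ) - wab F (2 * ℓ ^ m) α (β - γ) :=
  statement_11_general ℓ m F
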